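/- Define a two-variable polynomial family T by: T([b₁]) = (y^{b₁} − 1)/(y − 1) + x − 1, and for k ≥ 1, T([b₁, …, b_{2k+1}]) = ((x^{b_{2k}} − 1)/(x − 1)) · ((y^{b_{2k+1}} − 1)/(y − 1) + x − 1) · T([b₁, …, b_{2k−1}]) + T([b₁, …, b_{2k−2}, b_{2k−1} + b_{2k+1}]). Then for all odd-length sequences of positive integers [b₁, …, b_{2k+1}], T([b₁, …, b_{2k+1}]) = Σ_{A ⊆ E} ∏_{bᵢ ∈ A} (x^{bᵢ} − 1)/(x − 1) · ∏_{α ∈ f(A)} ((y^{α} − 1)/(y − 1) + x − 1), where E = {b₂, b₄, …, b_{2k}} (indexed by even positions) and f(A) is defined below. -/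

import Mathlib

/-- The truncated geometric sum `(x^n − 1)/(x − 1) = 1 + x + ⋯ + x^{n-1}`. -/
def geom {R : Type*} [CommRing R] (x : R) (n : ℕ) : R := ∑ i ∈ Finset.range n, x ^ i

/-- The recursion for the Tutte polynomial of the canonical Tait graph, on the
*reversed* list of denominators: `T'([b₁]) = (y^{b₁}−1)/(y−1) + x − 1` and
`T'([b_{2k+1}, b_{2k}, b_{2k-1}, …]) =
  ((x^{b_{2k}}−1)/(x−1))·((y^{b_{2k+1}}−1)/(y−1)+x−1)·T'([b_{2k-1}, …])
    + T'([b_{2k-1}+b_{2k+1}, …])`. -/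
def Trev {R : Type*} [CommRing R] (x y : R) : List ℕ → R
  | [b] => geom y b + x - 1
  | c :: b :: a :: rest =>
      geom x b * (geom y c + x - 1) * Trev x y (a :: rest) + Trev x y ((a + c) :: rest)
  | _ => 0
termination_by l => l.length

/-- `T([b₁, …, b_{2k+1}])`, defined by the recursion
`T([b₁]) = (y^{b₁}−1)/(y−1) + x − 1`,
`T([b₁, …, b_{2k+1}]) = ((x^{b_{2k}}−1)/(x−1))·((y^{b_{2k+1}}−1)/(y−1)+x−1)·T([b₁, …, b_{2k−1}])
  + T([b₁, …, b_{2k−2}, b_{2k−1}+b_{2k+1}])`. -/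
def Tpoly {R : Type*} [CommRing R] (x y : R) (l : List ℕ) : R := Trev x y l.reverse

/-- The list of blocks into which a set `A ⊆ {1, …, k}` of cut points splits
`{0, 1, …, k}`: each pair `(l, m)` stands for the block `l, l+1, …, m−1`.
(Here a cut point `a ∈ A` encodes the even position `2a`, and `j ∈ {0, …, k}`
encodes the odd position `2j+1`.) -/
def blocks (k : ℕ) (A : Finset ℕ) : List (ℕ × ℕ) :=
  List.zip (0 :: A.sort (· ≤ ·)) (A.sort (· ≤ ·) ++ [k + 1])

/-- `f(A)`: the multiset of block sums of the odd-indexed entries `b₁, b₃, …, b_{2k+1}`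
determined by a set `A` of even positions (encoded by `a ↦ 2a`, `a ∈ A ⊆ {1, …, k}`).
For `A = ∅` it is the single total sum `b₁ + b₃ + ⋯ + b_{2k+1}`. -/
def fSums (k : ℕ) (b : ℕ → ℕ) (A : Finset ℕ) : Multiset ℕ :=
  ((blocks k A).map fun p => ∑ j ∈ Finset.Ico p.1 p.2, b (2 * j + 1) : List ℕ)

/-!
Both sides satisfy the recursion defining `T`. Split the subsets `A ⊆ {1, …, k+1}` according to
whether they contain the last cut point `k+1`. If they do, `A` contributes the factor of
`b_{2k+2}` and `f(A)` gains the singleton block `b_{2k+3}`: this is the first summand of the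
recursion. If not, the last block of `f(A)` ends with `b_{2k+1} + b_{2k+3}`, so these terms form
the closed form of the shortened sequence `[b₁, …, b_{2k}, b_{2k+1} + b_{2k+3}]`: the second summand.
-/

open Finset

theorem Finset.sort_insert_of_forall_lt {α : Type*} [LinearOrder α] {s : Finset α} {a : α}
    (h : ∀ b ∈ s, b < a) : (insert a s).sort (· ≤ ·) = s.sort (· ≤ ·) ++ [a] := by
  have hnodup : (s.sort (· ≤ ·) ++ [a]).Nodup :=
    (sort_nodup s _).append (List.nodup_singleton a) (by simpa using fun h' => (h a h').false)
  have hsorted : (s.sort (· ≤ ·) ++ [a]).Pairwise (· ≤ ·) :=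
    List.pairwise_append.2 ⟨pairwise_sort s _, List.pairwise_singleton _ _,
      by simpa using fun b hb => (h b hb).le⟩
  have htoFinset : (s.sort (· ≤ ·) ++ [a]).toFinset = insert a s := by ext; simp
  rw [← htoFinset]
  exact (List.toFinset_sort (· ≤ ·) hnodup).2 hsorted

theorem sum_Ico_merge_top {M : Type*} [AddCommMonoid M] {g g' : ℕ → M} {k p : ℕ}
    (hlt : ∀ j < k, g' j = g j) (hk : g' k = g k + g (k + 1)) (hp : p ≤ k) :
    ∑ j ∈ Ico p (k + 2), g j = ∑ j ∈ Ico p (k + 1), g' j := by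
  rw [sum_Ico_succ_top (by omega), sum_Ico_succ_top hp, sum_Ico_succ_top hp, hk, add_assoc,
    sum_congr rfl fun j hj => hlt j (mem_Ico.1 hj).2]

theorem map_zip_sum_Ico_merge_top {M : Type*} [AddCommMonoid M] {g g' : ℕ → M} {k : ℕ}
    (hlt : ∀ j < k, g' j = g j) (hk : g' k = g k + g (k + 1)) :
    ∀ (s : List ℕ) (p : ℕ), p ≤ k → (∀ a ∈ s, a ≤ k) →
      (List.zip (p :: s) (s ++ [k + 2])).map (fun q => ∑ j ∈ Ico q.1 q.2, g j) =
        (List.zip (p :: s) (s ++ [k + 1])).map (fun q => ∑ j ∈ Ico q.1 q.2, g' j)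
  | [], p, hp, _ => by
    change [∑ j ∈ Ico p (k + 2), g j] = [∑ j ∈ Ico p (k + 1), g' j]
    rw [sum_Ico_merge_top hlt hk hp]
  | a :: s, p, _, hs => by
    have ha : a ≤ k := hs a List.mem_cons_self
    have hblock : ∑ j ∈ Ico p a, g j = ∑ j ∈ Ico p a, g' j :=
      sum_congr rfl fun j hj => (hlt j (by have := (mem_Ico.1 hj).2; omega)).symm
    rw [List.cons_append, List.cons_append, List.zip_cons_cons, List.zip_cons_cons, List.map_cons,
      List.map_cons, hblock,
      map_zip_sum_Ico_merge_top hlt hk s a ha fun a' ha' => hs a' (List.mem_cons_of_mem _ ha')]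

def mergeTail (k : ℕ) (b : ℕ → ℕ) : ℕ → ℕ :=
  Function.update b (2 * k + 1) (b (2 * k + 1) + b (2 * k + 3))

theorem mergeTail_of_ne {k i : ℕ} (b : ℕ → ℕ) (h : i ≠ 2 * k + 1) : mergeTail k b i = b i :=
  Function.update_of_ne h _ _

theorem mergeTail_self (k : ℕ) (b : ℕ → ℕ) :
    mergeTail k b (2 * k + 1) = b (2 * k + 1) + b (2 * k + 3) :=
  Function.update_self _ _ _

section Tpoly

variable {R : Type*} [CommRing R] (x y : R)

theorem Tpoly_singleton (a : ℕ) : Tpoly x y [a] = geom y a + x - 1 := by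
  rw [Tpoly, List.reverse_singleton, Trev]

theorem Tpoly_append_triple (l : List ℕ) (a b c : ℕ) :
    Tpoly x y (l ++ [a, b, c]) =
      geom x b * (geom y c + x - 1) * Tpoly x y (l ++ [a]) + Tpoly x y (l ++ [a + c]) := by
  simp only [Tpoly, List.reverse_append, List.reverse_cons, List.reverse_nil, List.nil_append,
    List.cons_append]
  rw [Trev]

theorem Tpoly_range_succ (k : ℕ) (b : ℕ → ℕ) :
    Tpoly x y ((List.range (2 * (k + 1) + 1)).map fun i => b (i + 1)) =
      geom x (b (2 * k + 2)) * (geom y (b (2 * k + 3)) + x - 1) *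
          Tpoly x y ((List.range (2 * k + 1)).map fun i => b (i + 1)) +
        Tpoly x y ((List.range (2 * k + 1)).map fun i => mergeTail k b (i + 1)) := by
  have hinit : ((List.range (2 * k)).map fun i => mergeTail k b (i + 1)) =
      (List.range (2 * k)).map fun i => b (i + 1) :=
    List.map_congr_left fun i hi => mergeTail_of_ne b (by have := List.mem_range.1 hi; omega)
  rw [show 2 * (k + 1) + 1 = 2 * k + 1 + 1 + 1 by ring]
  simp only [List.range_succ, List.map_append, List.map_singleton, List.append_assoc,
    List.singleton_append, hinit, mergeTail_self]
  exact Tpoly_append_triple x y _ (b (2 * k + 1)) (b (2 * k + 2)) (b (2 * k + 3))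

end Tpoly

section fSums

variable {k : ℕ} {A : Finset ℕ}

theorem fSums_insert_succ (b : ℕ → ℕ) (hA : ∀ a ∈ A, a ≤ k) :
    fSums (k + 1) b (insert (k + 1) A) = b (2 * k + 3) ::ₘ fSums k b A := by
  have hblocks : blocks (k + 1) (insert (k + 1) A) = blocks k A ++ [(k + 1, k + 2)] := by
    rw [blocks, blocks, sort_insert_of_forall_lt fun a ha => Nat.lt_succ_of_le (hA a ha),
      ← List.cons_append, List.zip_append (by simp)]
    rfl
  rw [fSums, fSums, hblocks, List.map_append, ← Multiset.coe_add, add_comm]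
  simp [Nat.Ico_succ_singleton, show 2 * (k + 1) + 1 = 2 * k + 3 by ring]

theorem fSums_succ_eq_mergeTail (b : ℕ → ℕ) (hA : ∀ a ∈ A, a ≤ k) :
    fSums (k + 1) b A = fSums k (mergeTail k b) A := by
  rw [fSums, fSums, blocks, blocks,
    map_zip_sum_Ico_merge_top (g := fun j => b (2 * j + 1))
      (fun j hj => mergeTail_of_ne b (by omega)) (mergeTail_self k b) _ 0 (Nat.zero_le k)
      fun a ha => hA a ((mem_sort _).1 ha)]

end fSums

section closedForm

variable {R : Type*} [CommRing R] (x y : R)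

def closedForm (k : ℕ) (b : ℕ → ℕ) : R :=
  ∑ A ∈ (Icc 1 k).powerset,
    (∏ a ∈ A, geom x (b (2 * a))) * ((fSums k b A).map fun α => geom y α + x - 1).prod

theorem closedForm_zero (b : ℕ → ℕ) : closedForm x y 0 b = geom y (b 1) + x - 1 := by
  simp [closedForm, fSums, blocks]

theorem closedForm_succ (k : ℕ) (b : ℕ → ℕ) :
    closedForm x y (k + 1) b =
      geom x (b (2 * k + 2)) * (geom y (b (2 * k + 3)) + x - 1) * closedForm x y k b +
        closedForm x y k (mergeTail k b) := by
  rw [closedForm, ← insert_Icc_right_eq_Icc_add_one (by omega), sum_powerset_insert (by simp),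
    add_comm, closedForm, closedForm, mul_sum]
  have hle : ∀ A ∈ (Icc 1 k).powerset, ∀ a ∈ A, a ≤ k :=
    fun A hA a ha => (mem_Icc.1 (mem_powerset.1 hA ha)).2
  congr 1
  · refine sum_congr rfl fun A hA => ?_
    have hA' := hle A hA
    rw [prod_insert fun h => by simpa using hA' _ h, fSums_insert_succ b hA', Multiset.map_cons,
      Multiset.prod_cons, show 2 * (k + 1) = 2 * k + 2 by ring]
    ring
  · refine sum_congr rfl fun A hA => ?_
    have hA' := hle A hA
    rw [fSums_succ_eq_mergeTail b hA',
      prod_congr rfl fun a ha => congrArg (geom x) (mergeTail_of_ne b (by have := hA' a ha; omega))]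

end closedForm

theorem Tpoly_closed_form_general {R : Type*} [CommRing R] (x y : R) (k : ℕ) (b : ℕ → ℕ) :
    Tpoly x y ((List.range (2 * k + 1)).map fun i => b (i + 1)) =
      ∑ A ∈ (Finset.Icc 1 k).powerset,
        (∏ a ∈ A, geom x (b (2 * a))) *
          ((fSums k b A).map fun α => geom y α + x - 1).prod := by
  change _ = closedForm x y k b
  induction k generalizing b with
  | zero => rw [closedForm_zero, ← Tpoly_singleton]; rfl
  | succ k ih => rw [Tpoly_range_succ, closedForm_succ, ih, ih]

/-- **Closed form for the Tutte polynomial of the canonical Tait graph**: for any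
odd-length sequence of positive integers `[b₁, …, b_{2k+1}]`,
`T([b₁, …, b_{2k+1}]) = Σ_{A ⊆ E} ∏_{bᵢ∈A} (x^{bᵢ}−1)/(x−1) ·
  ∏_{α ∈ f(A)} ((y^α−1)/(y−1) + x − 1)`,
where `E = {b₂, b₄, …, b_{2k}}` (indexed by the even positions `2a`, `a ∈ {1, …, k}`). -/
theorem Tpoly_closed_form {R : Type*} [CommRing R] (x y : R) (k : ℕ) (b : ℕ → ℕ)
    (hb : ∀ i, 1 ≤ i → i ≤ 2 * k + 1 → 1 ≤ b i) :
    Tpoly x y ((List.range (2 * k + 1)).map fun i => b (i + 1)) =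
      ∑ A ∈ (Finset.Icc 1 k).powerset,
        (∏ a ∈ A, geom x (b (2 * a))) *
          ((fSums k b A).map fun α => geom y α + x - 1).prod :=
  Tpoly_closed_form_general x y k b
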